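/- arXiv:2201.00228 — 3 statements merged into one kernel-verified Lean document; each statement's English description precedes it below -/
import Mathlib

section
/- Let d₁ ∈ {0,…,d} and let U ∈ ℝ^{d×d₁} have orthonormal columns (UᵀU = I). For v ∈ ℝ^d write v_U = UUᵀv and v_{U⊥} = v − UUᵀv. Let α = 1/3, β ≥ 0, and K ≥ 2 with 4K²β ≤ 1 and (1/3)^K ≤ β. Let z_r ∈ ℝ^d with ‖z_r‖₂ ≤ 2, and suppose w_0, …, w_K and y_1, …, y_K in ℝ^d satisfy: ‖w_0 − (z_r)_{U⊥}‖₂ ≤ α‖(z_r)_{U⊥}‖₂ + β‖z_r‖₂; for each k ∈ [K], ‖y_k − (w_{k−1})_U‖₂ ≤ α‖(w_{k−1})_U‖₂ + β‖w_{k−1}‖₂ and w_k = w_{k−1} − y_k. Define z_{r+1} = z_r − w_K. Then: (i) ‖(z_{r+1})_U − (z_r)_U‖₂ ≤ 4(K+2)β; (ii) ‖(z_{r+1})_{U⊥}‖₂ ≤ (2/3)‖(z_r)_{U⊥}‖₂ + 4K²β; and (iii) ‖z_{r+1}‖₂² ≤ ‖z_r‖₂² + 16K²β‖z_r‖₂ +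 32K⁴β². -/
/-!
Write `P` and `Q` for the orthogonal projections onto the column span `S` of `U` and onto `Sᗮ`.
If `y` approximates `P w` with error `e ≤ ‖P w‖/3 + β‖w‖`, then `w' = w - y` satisfies
`‖P w'‖ ≤ e` and `‖Q w' - Q w‖ ≤ e`. Hence along the inner loop the potential
`‖Q w_k - Q w_0‖ + ‖P w_k‖/2` grows by at most `(3/2)β‖w_k‖` per step, which keeps every iterate
of norm at most `5`, while `‖P w_k‖` contracts by `1/3` per step up to `O(β)`. Since `w_0 ≈ Q z_r`
with `‖P w_0‖ ≤ ‖Q z_r‖/3 + β‖z_r‖`, subtracting `w_K` barely moves the `S`-component of `z_r`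
(i) and leaves at most half of its `Sᗮ`-component (ii); (iii) follows by Pythagoras.
-/

open Matrix

/-- Euclidean norm of a vector in `ℝ^d`. -/
noncomputable def nrm {d : ℕ} (v : Fin d → ℝ) : ℝ := Real.sqrt (v ⬝ᵥ v)

/-- Orthogonal projection onto the column span of `U`: `v_U = UUᵀv`. -/
def pU {d dOne : ℕ} (U : Matrix (Fin d) (Fin dOne) ℝ) (v : Fin d → ℝ) : Fin d → ℝ :=
  U *ᵥ (Uᵀ *ᵥ v)

/-- Complementary projection: `v_{U⊥} = v − UUᵀv`. -/
def pPerp {d dOne : ℕ} (U : Matrix (Fin d) (Fin dOne) ℝ) (v : Fin d → ℝ) : Fin d → ℝ :=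
  v - pU U v

section ApproxProjection

variable {E : Type*} [NormedAddCommGroup E] [InnerProductSpace ℝ E]

def IsApproxProjection (T : Submodule ℝ E) [T.HasOrthogonalProjection] (α β : ℝ) (v y : E) :
    Prop :=
  ‖y - T.starProjection v‖ ≤ α * ‖T.starProjection v‖ + β * ‖v‖

variable {T : Submodule ℝ E} [T.HasOrthogonalProjection] {α β : ℝ} {v v' y : E}

namespace IsApproxProjection

theorem norm_starProjection_sub_le (h : IsApproxProjection T α β v y) :
    ‖T.starProjection y - T.starProjection v‖ ≤ α * ‖T.starProjection v‖ + β * ‖v‖ := by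
  have hP : T.starProjection (y - T.starProjection v) =
      T.starProjection y - T.starProjection v := by
    rw [map_sub, T.starProjection_eq_self_iff.mpr (T.starProjection_apply_mem v)]
  exact hP ▸ (T.norm_starProjection_apply_le _).trans h

theorem norm_orthogonal_starProjection_le (h : IsApproxProjection T α β v y) :
    ‖Tᗮ.starProjection y‖ ≤ α * ‖T.starProjection v‖ + β * ‖v‖ := by
  have hQ : Tᗮ.starProjection (y - T.starProjection v) = Tᗮ.starProjection y := by
    rw [map_sub, T.starProjection_orthogonal_apply_eq_zero (T.starProjection_apply_mem v),
      sub_zero]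
  exact hQ ▸ (Tᗮ.norm_starProjection_apply_le _).trans h

theorem norm_starProjection_residual_le (h : IsApproxProjection T α β v (v - v')) :
    ‖T.starProjection v'‖ ≤ α * ‖T.starProjection v‖ + β * ‖v‖ := by
  simpa only [map_sub, sub_sub_cancel_left, norm_neg] using h.norm_starProjection_sub_le

theorem norm_orthogonal_starProjection_residual_sub_le
    (h : IsApproxProjection T α β v (v - v')) :
    ‖Tᗮ.starProjection v' - Tᗮ.starProjection v‖ ≤ α * ‖T.starProjection v‖ + β * ‖v‖ := by
  simpa only [map_sub, norm_sub_rev] using h.norm_orthogonal_starProjection_le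

end IsApproxProjection

end ApproxProjection

theorem le_pow_mul_add_div_of_le_mul_add {u : ℕ → ℝ} {q c : ℝ} {N : ℕ} (hq : 0 ≤ q)
    (hq1 : q < 1) (hc : 0 ≤ c) (hu : ∀ k < N, u (k + 1) ≤ q * u k + c) :
    ∀ k ≤ N, u k ≤ q ^ k * u 0 + c / (1 - q) := by
  have h1q : 1 - q ≠ 0 := by linarith
  intro k
  induction k with
  | zero => intro _; simpa using div_nonneg hc (sub_nonneg.2 hq1.le)
  | succ k ih =>
    intro hk
    calc u (k + 1) ≤ q * u k + c := hu k hk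
      _ ≤ q * (q ^ k * u 0 + c / (1 - q)) + c := by gcongr; exact ih (by omega)
      _ = q ^ (k + 1) * u 0 + c / (1 - q) := by field_simp; ring

section Round

variable {E : Type*} [NormedAddCommGroup E] [InnerProductSpace ℝ E]
  (S : Submodule ℝ E) [S.HasOrthogonalProjection] {β : ℝ} {N : ℕ} {w : ℕ → E}

theorem drift_add_half_norm_starProjection_le
    (hstep : ∀ k < N, IsApproxProjection S (1 / 3) β (w k) (w k - w (k + 1))) :
    ∀ k ≤ N, ‖Sᗮ.starProjection (w k) - Sᗮ.starProjection (w 0)‖ + ‖S.starProjection (w k)‖ / 2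
      ≤ ‖S.starProjection (w 0)‖ / 2 + 3 / 2 * β * ∑ j ∈ Finset.range k, ‖w j‖ := by
  intro k
  induction k with
  | zero => intro _; simp
  | succ k ih =>
    intro hk
    have hP := (hstep k hk).norm_starProjection_residual_le
    have hQ := (hstep k hk).norm_orthogonal_starProjection_residual_sub_le
    have htri := norm_sub_le_norm_sub_add_norm_sub (Sᗮ.starProjection (w (k + 1)))
      (Sᗮ.starProjection (w k)) (Sᗮ.starProjection (w 0))
    rw [Finset.sum_range_succ]
    linarith [ih (by omega)]

theorem norm_iterate_le {M : ℝ} (hβ : 0 ≤ β) (hM : 0 ≤ M)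
    (hstep : ∀ k < N, IsApproxProjection S (1 / 3) β (w k) (w k - w (k + 1)))
    (h0 : ‖Sᗮ.starProjection (w 0)‖ + ‖S.starProjection (w 0)‖ + 3 * N * β * M ≤ M) :
    ∀ k ≤ N, ‖w k‖ ≤ M := by
  intro k
  induction k using Nat.strong_induction_on with
  | _ k ih =>
    intro hk
    have hsum : ∑ j ∈ Finset.range k, ‖w j‖ ≤ N * M := by
      calc ∑ j ∈ Finset.range k, ‖w j‖ ≤ k * M := by
            simpa using Finset.sum_le_card_nsmul _ _ M fun j hj =>
              ih j (Finset.mem_range.1 hj) ((Finset.mem_range.1 hj).le.trans hk)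
        _ ≤ N * M := by gcongr
    have hsplit : ‖w k‖ ≤ ‖S.starProjection (w k)‖ + ‖Sᗮ.starProjection (w k)‖ := by
      simpa using norm_add_le (S.starProjection (w k)) (Sᗮ.starProjection (w k))
    have htri := norm_le_norm_sub_add (Sᗮ.starProjection (w k)) (Sᗮ.starProjection (w 0))
    have hdrift := drift_add_half_norm_starProjection_le S hstep k hk
    linarith [mul_le_mul_of_nonneg_left hsum hβ,
      norm_nonneg (Sᗮ.starProjection (w k) - Sᗮ.starProjection (w 0))]

theorem norm_starProjection_last_le {M : ℝ} (hβ : 0 ≤ β)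
    (hstep : ∀ k < N, IsApproxProjection S (1 / 3) β (w k) (w k - w (k + 1)))
    (hw : ∀ k ≤ N, ‖w k‖ ≤ M) :
    ‖S.starProjection (w N)‖ ≤ (1 / 3) ^ N * ‖S.starProjection (w 0)‖ + 3 / 2 * β * M := by
  have hM : 0 ≤ M := (norm_nonneg _).trans (hw 0 (Nat.zero_le N))
  have hrec : ∀ k < N,
      ‖S.starProjection (w (k + 1))‖ ≤ 1 / 3 * ‖S.starProjection (w k)‖ + β * M :=
    fun k hk => (hstep k hk).norm_starProjection_residual_le.trans
      (by gcongr; exact hw k hk.le)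
  exact (le_pow_mul_add_div_of_le_mul_add (u := fun k => ‖S.starProjection (w k)‖)
    (by norm_num) (by norm_num) (mul_nonneg hβ hM) hrec N le_rfl).trans_eq (by ring)

theorem norm_drift_last_le {M : ℝ} (hβ : 0 ≤ β)
    (hstep : ∀ k < N, IsApproxProjection S (1 / 3) β (w k) (w k - w (k + 1)))
    (hw : ∀ k ≤ N, ‖w k‖ ≤ M) :
    ‖Sᗮ.starProjection (w N) - Sᗮ.starProjection (w 0)‖ ≤
      ‖S.starProjection (w 0)‖ / 2 + 3 / 2 * β * N * M := by
  have hsum : ∑ j ∈ Finset.range N, ‖w j‖ ≤ N * M := by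
    simpa using Finset.sum_le_card_nsmul _ _ M fun j hj => hw j (Finset.mem_range.1 hj).le
  have hdrift := drift_add_half_norm_starProjection_le S hstep N le_rfl
  nlinarith [mul_le_mul_of_nonneg_left hsum hβ, norm_nonneg (S.starProjection (w N))]

theorem round_estimates (hβ : 0 ≤ β) (hβ1 : β ≤ 1 / 16) (hNβ : N * β ≤ 1 / 16)
    (hβN : (1 / 3 : ℝ) ^ N ≤ β) {z : E} (hz : ‖z‖ ≤ 2)
    (h0 : IsApproxProjection Sᗮ (1 / 3) β z (w 0))
    (hstep : ∀ k < N, IsApproxProjection S (1 / 3) β (w k) (w k - w (k + 1))) :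
    ‖S.starProjection (w N)‖ ≤ β * ‖z‖ + 15 / 2 * β ∧
    ‖Sᗮ.starProjection (z - w N)‖ ≤
      ‖Sᗮ.starProjection z‖ / 2 + 3 / 2 * β * ‖z‖ + 15 / 2 * N * β := by
  have hβZ : β * ‖z‖ ≤ 2 * β := by nlinarith [norm_nonneg z]
  have hcZ := Sᗮ.norm_starProjection_apply_le z
  have hQ0 := h0.norm_starProjection_sub_le
  have hP0 : ‖S.starProjection (w 0)‖ ≤ 1 / 3 * ‖Sᗮ.starProjection z‖ + β * ‖z‖ := by
    have h := h0.norm_orthogonal_starProjection_le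
    rwa [Submodule.starProjection_orthogonal_val, Submodule.starProjection_orthogonal_val,
      sub_sub_cancel] at h
  have hw : ∀ k ≤ N, ‖w k‖ ≤ 5 := norm_iterate_le S hβ (by norm_num) hstep (by
    linarith [norm_le_norm_sub_add (Sᗮ.starProjection (w 0)) (Sᗮ.starProjection z)])
  constructor
  · have hpow : (1 / 3 : ℝ) ^ N * ‖S.starProjection (w 0)‖ ≤ β * ‖z‖ := by
      gcongr
      nlinarith [norm_nonneg z]
    linarith [norm_starProjection_last_le S hβ hstep hw]
  · have hsplit : Sᗮ.starProjection (z - w N) =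
        -((Sᗮ.starProjection (w 0) - Sᗮ.starProjection z)
          + (Sᗮ.starProjection (w N) - Sᗮ.starProjection (w 0))) := by
      rw [map_sub]; abel
    rw [hsplit, norm_neg]
    linarith [norm_drift_last_le S hβ hstep hw, norm_add_le
      (Sᗮ.starProjection (w 0) - Sᗮ.starProjection z)
      (Sᗮ.starProjection (w N) - Sᗮ.starProjection (w 0))]

end Round

theorem four_le_of_third_pow_le {N : ℕ} {β : ℝ} (hN : 2 ≤ N) (hNβ : 4 * (N : ℝ) ^ 2 * β ≤ 1)
    (hβN : (1 / 3 : ℝ) ^ N ≤ β) : 4 ≤ N := by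
  by_contra! h
  interval_cases N <;> norm_num at hNβ hβN <;> linarith

theorem sq_add_sq_le_of_le {p c Z β k : ℝ} (hp : 0 ≤ p) (hpZ : p ≤ Z) (hc : 0 ≤ c)
    (hcZ : c ≤ Z) (hZ : Z ≤ 2) (hβ : 0 ≤ β) (hk : 16 ≤ k) :
    (p + β * Z + 15 / 2 * β) ^ 2 + (2 / 3 * c + 4 * k * β) ^ 2 ≤
      p ^ 2 + c ^ 2 + 16 * k * β * Z + 32 * k ^ 2 * β ^ 2 := by
  have hβZ : 0 ≤ β * Z := mul_nonneg hβ (hp.trans hpZ)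
  have hX : β * Z + 15 / 2 * β ≤ 19 / 2 * β := by nlinarith
  have hpX : p * (β * Z + 15 / 2 * β) ≤ Z * (19 / 2 * β) := by gcongr; linarith
  have hck : c * (k * β) ≤ Z * (k * β) := by gcongr
  nlinarith [mul_nonneg (mul_nonneg (by linarith : (0 : ℝ) ≤ k) hβ) (hc.trans hcZ),
    mul_nonneg (mul_nonneg hβ hβ) (sub_nonneg.2 hk), pow_le_pow_left₀ (by positivity) hX 2]

theorem outer_round_guarantee_starProjection {E : Type*} [NormedAddCommGroup E]
    [InnerProductSpace ℝ E] (S : Submodule ℝ E) [S.HasOrthogonalProjection] {β : ℝ} (hβ : 0 ≤ β)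
    {N : ℕ} (hN : 2 ≤ N) (hNβ : 4 * (N : ℝ) ^ 2 * β ≤ 1) (hβN : (1 / 3 : ℝ) ^ N ≤ β)
    {z : E} (hz : ‖z‖ ≤ 2) {w : ℕ → E} (h0 : IsApproxProjection Sᗮ (1 / 3) β z (w 0))
    (hstep : ∀ k < N, IsApproxProjection S (1 / 3) β (w k) (w k - w (k + 1))) :
    ‖S.starProjection (z - w N) - S.starProjection z‖ ≤ 4 * ((N : ℝ) + 2) * β ∧
    ‖Sᗮ.starProjection (z - w N)‖ ≤ 2 / 3 * ‖Sᗮ.starProjection z‖ + 4 * (N : ℝ) ^ 2 * β ∧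
    ‖z - w N‖ ^ 2 ≤ ‖z‖ ^ 2 + 16 * (N : ℝ) ^ 2 * β * ‖z‖ + 32 * (N : ℝ) ^ 4 * β ^ 2 := by
  have hN4 : (4 : ℝ) ≤ N := by exact_mod_cast four_le_of_third_pow_le hN hNβ hβN
  have hNβ' : N * β ≤ 1 / 16 := by nlinarith
  obtain ⟨hPN, hQN⟩ := round_estimates S hβ (by nlinarith) hNβ' hβN hz h0 hstep
  have hβZ : β * ‖z‖ ≤ 2 * β := by nlinarith [norm_nonneg z]
  have hii : ‖Sᗮ.starProjection (z - w N)‖ ≤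
      2 / 3 * ‖Sᗮ.starProjection z‖ + 4 * (N : ℝ) ^ 2 * β := by
    nlinarith [mul_nonneg hβ (by nlinarith : (0 : ℝ) ≤ 4 * N ^ 2 - 15 / 2 * N - 3),
      norm_nonneg (Sᗮ.starProjection z)]
  refine ⟨?_, hii, ?_⟩
  · rw [map_sub, sub_sub_cancel_left, norm_neg]
    nlinarith
  · calc ‖z - w N‖ ^ 2
          = ‖S.starProjection (z - w N)‖ ^ 2 + ‖Sᗮ.starProjection (z - w N)‖ ^ 2 :=
            Submodule.norm_sq_eq_add_norm_sq_starProjection _ S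
      _ ≤ (‖S.starProjection z‖ + β * ‖z‖ + 15 / 2 * β) ^ 2
            + (2 / 3 * ‖Sᗮ.starProjection z‖ + 4 * (N : ℝ) ^ 2 * β) ^ 2 := by
            gcongr
            rw [map_sub]
            linarith [norm_sub_le (S.starProjection z) (S.starProjection (w N))]
      _ ≤ ‖S.starProjection z‖ ^ 2 + ‖Sᗮ.starProjection z‖ ^ 2
            + 16 * (N : ℝ) ^ 2 * β * ‖z‖ + 32 * ((N : ℝ) ^ 2) ^ 2 * β ^ 2 :=
            sq_add_sq_le_of_le (norm_nonneg _) (S.norm_starProjection_apply_le z) (norm_nonneg _)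
              (Sᗮ.norm_starProjection_apply_le z) hz hβ (by nlinarith)
      _ = ‖z‖ ^ 2 + 16 * (N : ℝ) ^ 2 * β * ‖z‖ + 32 * (N : ℝ) ^ 4 * β ^ 2 := by
            rw [Submodule.norm_sq_eq_add_norm_sq_starProjection z S]; ring

theorem nrm_eq_norm_toLp {d : ℕ} (v : Fin d → ℝ) : nrm v = ‖WithLp.toLp 2 v‖ := by
  rw [nrm, norm_eq_sqrt_real_inner, EuclideanSpace.inner_toLp_toLp]
  rfl

theorem isSymmetricProjection_toEuclideanLin_mul_transpose {d dOne : ℕ}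
    {U : Matrix (Fin d) (Fin dOne) ℝ} (hU : Uᵀ * U = 1) :
    (toEuclideanLin (U * Uᵀ)).IsSymmetricProjection where
  isIdempotentElem := by
    rw [IsIdempotentElem, Module.End.mul_eq_comp, ← toLpLin_mul_same, Matrix.mul_assoc,
      ← Matrix.mul_assoc Uᵀ, hU, Matrix.one_mul]
  isSymmetric := by
    rw [isSymmetric_toEuclideanLin_iff, ← conjTranspose_eq_transpose_of_trivial]
    exact isHermitian_mul_conjTranspose_self U

theorem toLp_pU {d dOne : ℕ} (U : Matrix (Fin d) (Fin dOne) ℝ) (v : Fin d → ℝ) :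
    WithLp.toLp 2 (pU U v) = toEuclideanLin (U * Uᵀ) (WithLp.toLp 2 v) := by
  rw [pU, toLpLin_toLp, Matrix.mulVec_mulVec]; rfl

theorem exists_toLp_pU_eq_starProjection {d dOne : ℕ} {U : Matrix (Fin d) (Fin dOne) ℝ}
    (hU : Uᵀ * U = 1) :
    ∃ (S : Submodule ℝ (EuclideanSpace ℝ (Fin d))) (_ : S.HasOrthogonalProjection),
      ∀ v, WithLp.toLp 2 (pU U v) = S.starProjection (WithLp.toLp 2 v) := by
  obtain ⟨S, hS, hproj⟩ := LinearMap.isSymmetricProjection_iff_eq_coe_starProjection.mp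
    (isSymmetricProjection_toEuclideanLin_mul_transpose hU)
  exact ⟨S, hS, fun v => by rw [toLp_pU, hproj]; rfl⟩

theorem outer_round_guarantee_general {d dOne : ℕ}
    (U : Matrix (Fin d) (Fin dOne) ℝ) (hU : Uᵀ * U = 1)
    (β : ℝ) (hβ : 0 ≤ β)
    (K : ℕ) (hK : 2 ≤ K) (hKβ : 4 * (K : ℝ) ^ 2 * β ≤ 1) (hβK : (1 / 3 : ℝ) ^ K ≤ β)
    (zr : Fin d → ℝ) (hzr : nrm zr ≤ 2)
    (w y : ℕ → Fin d → ℝ)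
    (hw0 : nrm (w 0 - pPerp U zr) ≤ (1 / 3) * nrm (pPerp U zr) + β * nrm zr)
    (hy : ∀ k, 1 ≤ k → k ≤ K →
      nrm (y k - pU U (w (k - 1))) ≤ (1 / 3) * nrm (pU U (w (k - 1))) + β * nrm (w (k - 1)))
    (hw : ∀ k, 1 ≤ k → k ≤ K → w k = w (k - 1) - y k) :
    nrm (pU U (zr - w K) - pU U zr) ≤ 4 * ((K : ℝ) + 2) * β ∧
    nrm (pPerp U (zr - w K)) ≤ (2 / 3) * nrm (pPerp U zr) + 4 * (K : ℝ) ^ 2 * β ∧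
    (nrm (zr - w K)) ^ 2 ≤
      (nrm zr) ^ 2 + 16 * (K : ℝ) ^ 2 * β * nrm zr + 32 * (K : ℝ) ^ 4 * β ^ 2 := by
  obtain ⟨S, _, hpU⟩ := exists_toLp_pU_eq_starProjection hU
  have hpPerp (v : Fin d → ℝ) :
      WithLp.toLp 2 (pPerp U v) = Sᗮ.starProjection (WithLp.toLp 2 v) := by
    rw [pPerp, WithLp.toLp_sub, hpU, Submodule.starProjection_orthogonal_val]
  have hstep : ∀ k < K, IsApproxProjection S (1 / 3) β (WithLp.toLp 2 (w k))
      (WithLp.toLp 2 (w k) - WithLp.toLp 2 (w (k + 1))) := by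
    intro k hk
    have hyk := hy (k + 1) (by omega) hk
    rw [hw (k + 1) (by omega) hk, Nat.add_sub_cancel, ← WithLp.toLp_sub, sub_sub_cancel]
    simpa only [IsApproxProjection, Nat.add_sub_cancel, nrm_eq_norm_toLp, WithLp.toLp_sub, hpU]
      using hyk
  simp only [nrm_eq_norm_toLp, WithLp.toLp_sub, hpU, hpPerp] at hzr hw0 ⊢
  exact outer_round_guarantee_starProjection S hβ hK hKβ hβK hzr
    (w := fun k => WithLp.toLp 2 (w k)) hw0 hstep

/-- Lemma 4.5: guarantee of one outer round of the hardness-amplification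
procedure, Algorithm 1, with `α = 1/3` and explicit constants. Setting
`z_{r+1} = z_r − w_K`: (i) the `U`-component moves by at most `4(K+2)β`; (ii) the orthogonal
component contracts by a factor `2/3` up to `4K²β`; (iii) the squared norm grows by at most
`16K²β‖z_r‖ + 32K⁴β²`. -/
theorem outer_round_guarantee {d dOne : ℕ} (hdOne : dOne ≤ d)
    (U : Matrix (Fin d) (Fin dOne) ℝ) (hU : Uᵀ * U = 1)
    (β : ℝ) (hβ : 0 ≤ β)
    (K : ℕ) (hK : 2 ≤ K) (hKβ : 4 * (K : ℝ) ^ 2 * β ≤ 1) (hβK : (1 / 3 : ℝ) ^ K ≤ β)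
    (zr : Fin d → ℝ) (hzr : nrm zr ≤ 2)
    (w y : ℕ → Fin d → ℝ)
    (hw0 : nrm (w 0 - pPerp U zr) ≤ (1 / 3) * nrm (pPerp U zr) + β * nrm zr)
    (hy : ∀ k, 1 ≤ k → k ≤ K →
      nrm (y k - pU U (w (k - 1))) ≤ (1 / 3) * nrm (pU U (w (k - 1))) + β * nrm (w (k - 1)))
    (hw : ∀ k, 1 ≤ k → k ≤ K → w k = w (k - 1) - y k) :
    nrm (pU U (zr - w K) - pU U zr) ≤ 4 * ((K : ℝ) + 2) * β ∧
    nrm (pPerp U (zr - w K)) ≤ (2 / 3) * nrm (pPerp U zr) + 4 * (K : ℝ) ^ 2 * β ∧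
    (nrm (zr - w K)) ^ 2 ≤
      (nrm zr) ^ 2 + 16 * (K : ℝ) ^ 2 * β * nrm zr + 32 * (K : ℝ) ^ 4 * β ^ 2 :=
  outer_round_guarantee_general U hU β hβ K hK hKβ hβK zr hzr w y hw0 hy hw
end

section
/- There exist constants C and D₀ such that the following holds for all d ≥ D₀. Let d₁ ∈ [d], let U ∈ ℝ^{d×d₁} and U⊥ ∈ ℝ^{d×(d−d₁)} have orthonormal columns with [U, U⊥] orthogonal. Let λ = d^{−40}, ε = 1/100, x* = (1/√d)·Σ_{j=1}^{d−d₁} U⊥_{·,j}, and let z ∈ ℝ^d with ‖z‖₂ ≤ 1. Define L(x) = ‖U⊥ᵀ x − (1/√d)·1_{d−d₁}‖₂² + (1/100)·(⟨z, x⟩ − 10)² + λ‖x‖₂². Let x' ∈ ℝ^d be any ε-approximate minimizer, i.e., √(L(x')) ≤ (1+ε)·min_{x ∈ ℝ^d} √(L(x)). Set y = x' − x* and define ẑ ∈ ℝ^d as follows: if ‖y‖₂ ≥ d³ or |10 − ⟨z, x'⟩| ≥ 200 d⁴ √λ, set ẑ = 0; otherwise set ẑ = ξ*·y, where ξ* ∈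 ℝ minimizes ξ ↦ ‖z − ξ·y‖₂ (explicitly ξ* = ⟨z, y⟩/‖y‖₂² if y ≠ 0, and ξ* = 0 if y = 0). Then ‖ẑ − UUᵀz‖₂ ≤ (1/3)·‖UUᵀz‖₂ + C/d³. -/
/-!
Write `x = U a + U⊥ b` and `z = U q + U⊥ p`. In these coordinates
`L x = ‖b - v‖² + (⟨q, a⟩ + ⟨p, b⟩ - 10)² / 100 + λ (‖a‖² + ‖b‖²)` with `v = U⊥ᵀ x*`.
When `q ≠ 0`, the point `a = c q`, `b = v` with `c` chosen to kill the residual has loss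
`λ (‖v‖² + c² ‖q‖²)`, so `L x' · ‖q‖² = O(λ)`.

If `‖q‖ ≥ 100 / d³`, this makes `x'` short and its residual tiny, so neither threshold fires;
hence when one fires, `ẑ = 0` is within `O(1/d³)` of `UUᵀz`. Otherwise the residual bound forces
`⟨q, a⟩ ≥ 6.7`, hence `‖q‖ ≳ 1/d³`, so `‖b - v‖` is tiny, and comparing `x'` with the point whose
`a` is replaced by its projection onto `q` bounds the Gram defect `‖q‖²‖a‖² - ⟨q, a⟩²` by `5/2`.
The line-search error obeys `‖ξ y - UUᵀz‖² ‖y‖² = ‖q‖² ‖y‖² + ⟨p, b - v⟩² - ⟨q, a⟩²`, which these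
bounds make at most `‖q‖² ‖y‖² / 9`.
-/

open Matrix

section DotProduct

variable {ι R : Type*} [Fintype ι] [CommRing R] [LinearOrder R] [IsStrictOrderedRing R]

lemma dotProduct_self_nonneg (v : ι → R) : 0 ≤ v ⬝ᵥ v :=
  Finset.sum_nonneg fun i _ => mul_self_nonneg (v i)

lemma sq_dotProduct_le (u v : ι → R) : (u ⬝ᵥ v) ^ 2 ≤ (u ⬝ᵥ u) * (v ⬝ᵥ v) := by
  simpa only [dotProduct, pow_two] using Finset.sum_mul_sq_le_sq_mul_sq Finset.univ u v

lemma abs_dotProduct_le_one {u v : ι → R} (hu : u ⬝ᵥ u ≤ 1) (hv : v ⬝ᵥ v ≤ 1) :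
    |u ⬝ᵥ v| ≤ 1 :=
  (sq_le_one_iff_abs_le_one _).mp <| (sq_dotProduct_le u v).trans <|
    mul_le_one₀ hu (dotProduct_self_nonneg v) hv

end DotProduct

section OrthonormalPair

variable {n m k R : Type*} [Fintype n] [Fintype m] [Fintype k] [CommRing R]
  {U : Matrix n m R} {V : Matrix n k R}

lemma mulVec_dotProduct (A : Matrix n m R) (a : m → R) (w : n → R) :
    (A *ᵥ a) ⬝ᵥ w = a ⬝ᵥ (Aᵀ *ᵥ w) := by
  rw [dotProduct_comm, dotProduct_mulVec, ← mulVec_transpose, dotProduct_comm]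

lemma transpose_mulVec_add_mulVec_left [DecidableEq m] (hU : Uᵀ * U = 1) (hUV : Uᵀ * V = 0)
    (a : m → R) (b : k → R) : Uᵀ *ᵥ (U *ᵥ a + V *ᵥ b) = a := by
  rw [mulVec_add, mulVec_mulVec, mulVec_mulVec, hU, hUV, one_mulVec, zero_mulVec, add_zero]

lemma transpose_mulVec_add_mulVec_right [DecidableEq k] (hV : Vᵀ * V = 1) (hUV : Uᵀ * V = 0)
    (a : m → R) (b : k → R) : Vᵀ *ᵥ (U *ᵥ a + V *ᵥ b) = b := by
  have hVU : Vᵀ * U = 0 := by simpa using congrArg transpose hUV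
  rw [mulVec_add, mulVec_mulVec, mulVec_mulVec, hV, hVU, one_mulVec, zero_mulVec, zero_add]

lemma dotProduct_mulVec_add_mulVec [DecidableEq m] [DecidableEq k] (hU : Uᵀ * U = 1)
    (hV : Vᵀ * V = 1) (hUV : Uᵀ * V = 0) (a a' : m → R) (b b' : k → R) :
    (U *ᵥ a + V *ᵥ b) ⬝ᵥ (U *ᵥ a' + V *ᵥ b') = a ⬝ᵥ a' + b ⬝ᵥ b' := by
  rw [add_dotProduct, mulVec_dotProduct, mulVec_dotProduct,
    transpose_mulVec_add_mulVec_left hU hUV, transpose_mulVec_add_mulVec_right hV hUV]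

lemma mulVec_transpose_mulVec_add [DecidableEq n] (hI : U * Uᵀ + V * Vᵀ = 1) (x : n → R) :
    U *ᵥ (Uᵀ *ᵥ x) + V *ᵥ (Vᵀ *ᵥ x) = x := by
  rw [mulVec_mulVec, mulVec_mulVec, ← add_mulVec, hI, one_mulVec]

end OrthonormalPair

section LineSearch

variable {ι : Type*} [Fintype ι]

lemma lineSearch_error_mul_dotProduct_self {K : Type*} [Field K] (z w y : ι → K)
    (hy : y ⬝ᵥ y ≠ 0) :
    ((z ⬝ᵥ y / y ⬝ᵥ y) • y - w) ⬝ᵥ ((z ⬝ᵥ y / y ⬝ᵥ y) • y - w) * (y ⬝ᵥ y) =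
      (w ⬝ᵥ w) * (y ⬝ᵥ y) + ((z - w) ⬝ᵥ y) ^ 2 - (w ⬝ᵥ y) ^ 2 := by
  simp only [sub_dotProduct, dotProduct_sub, smul_dotProduct, dotProduct_smul, smul_eq_mul,
    dotProduct_comm w y]
  field_simp
  ring

lemma sqrt_lineSearch_error_le {z w y : ι → ℝ} (hy : 0 < y ⬝ᵥ y)
    (h : 9 * ((w ⬝ᵥ w) * (y ⬝ᵥ y) + ((z - w) ⬝ᵥ y) ^ 2 - (w ⬝ᵥ y) ^ 2) ≤ (w ⬝ᵥ w) * (y ⬝ᵥ y)) :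
    √(((z ⬝ᵥ y / y ⬝ᵥ y) • y - w) ⬝ᵥ ((z ⬝ᵥ y / y ⬝ᵥ y) • y - w)) ≤ 1 / 3 * √(w ⬝ᵥ w) := by
  rw [← lineSearch_error_mul_dotProduct_self z w y hy.ne'] at h
  have hle : ((z ⬝ᵥ y / y ⬝ᵥ y) • y - w) ⬝ᵥ ((z ⬝ᵥ y / y ⬝ᵥ y) • y - w) ≤ (1 / 3) ^ 2 * (w ⬝ᵥ w) :=
    le_of_mul_le_mul_right (by linarith) hy
  calc _ ≤ √((1 / 3) ^ 2 * (w ⬝ᵥ w)) := Real.sqrt_le_sqrt hle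
    _ = 1 / 3 * √(w ⬝ᵥ w) := by rw [Real.sqrt_mul (by norm_num), Real.sqrt_sq (by norm_num)]

end LineSearch

section Coordinates

variable {m k : Type*} [Fintype m] [Fintype k]

/-- The loss `L` at `x = U a + U⊥ b`, where `q = Uᵀ z`, `p = U⊥ᵀ z` and `v = U⊥ᵀ x*`. -/
noncomputable def coordLoss (lam : ℝ) (q : m → ℝ) (p v : k → ℝ) (a : m → ℝ) (b : k → ℝ) : ℝ :=
  (b - v) ⬝ᵥ (b - v) + 1 / 100 * (q ⬝ᵥ a + p ⬝ᵥ b - 10) ^ 2 + lam * (a ⬝ᵥ a + b ⬝ᵥ b)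

def IsNearMinimizer (lam : ℝ) (q : m → ℝ) (p v : k → ℝ) (a : m → ℝ) (b : k → ℝ) : Prop :=
  ∀ a₀ b₀, coordLoss lam q p v a b ≤ (101 / 100) ^ 2 * coordLoss lam q p v a₀ b₀

variable {lam D : ℝ} {q a : m → ℝ} {p v b : k → ℝ}

lemma dotProduct_sub_self_le_coordLoss (hlam : 0 ≤ lam) :
    (b - v) ⬝ᵥ (b - v) ≤ coordLoss lam q p v a b := by
  have := dotProduct_self_nonneg a
  have := dotProduct_self_nonneg b
  unfold coordLoss
  nlinarith [sq_nonneg (q ⬝ᵥ a + p ⬝ᵥ b - 10)]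

lemma sq_residual_le_coordLoss (hlam : 0 ≤ lam) :
    (10 - (q ⬝ᵥ a + p ⬝ᵥ b)) ^ 2 ≤ 100 * coordLoss lam q p v a b := by
  have := dotProduct_self_nonneg (b - v)
  have := dotProduct_self_nonneg a
  have := dotProduct_self_nonneg b
  unfold coordLoss
  nlinarith

lemma lam_mul_le_coordLoss : lam * (a ⬝ᵥ a + b ⬝ᵥ b) ≤ coordLoss lam q p v a b := by
  have := dotProduct_self_nonneg (b - v)
  unfold coordLoss
  nlinarith [sq_nonneg (q ⬝ᵥ a + p ⬝ᵥ b - 10)]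

lemma isNearMinimizer_of_sqrt_le {n : Type*} [Fintype n] [DecidableEq m] [DecidableEq k]
    {U : Matrix n m ℝ} {V : Matrix n k ℝ} (hU : Uᵀ * U = 1) (hV : Vᵀ * V = 1)
    (hUV : Uᵀ * V = 0) (hlam : 0 ≤ lam) {L : (n → ℝ) → ℝ}
    (hL : ∀ x, L x = (Vᵀ *ᵥ x - v) ⬝ᵥ (Vᵀ *ᵥ x - v) +
      1 / 100 * ((U *ᵥ q + V *ᵥ p) ⬝ᵥ x - 10) ^ 2 + lam * (x ⬝ᵥ x))
    (happrox : ∀ x, √(L (U *ᵥ a + V *ᵥ b)) ≤ (1 + 1 / 100) * √(L x)) :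
    IsNearMinimizer lam q p v a b := by
  intro a₀ b₀
  have hcoord : ∀ a' b', L (U *ᵥ a' + V *ᵥ b') = coordLoss lam q p v a' b' := fun _ _ => by
    rw [hL, transpose_mulVec_add_mulVec_right hV hUV, dotProduct_mulVec_add_mulVec hU hV hUV,
      dotProduct_mulVec_add_mulVec hU hV hUV]
    rfl
  have hL₀ : ∀ a' b', 0 ≤ coordLoss lam q p v a' b' := fun _ _ =>
    (dotProduct_self_nonneg _).trans (dotProduct_sub_self_le_coordLoss hlam)
  have h := pow_le_pow_left₀ (Real.sqrt_nonneg _) (happrox (U *ᵥ a₀ + V *ᵥ b₀)) 2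
  rwa [hcoord, hcoord, mul_pow, Real.sq_sqrt (hL₀ _ _), Real.sq_sqrt (hL₀ _ _),
    show (1 : ℝ) + 1 / 100 = 101 / 100 by norm_num] at h

lemma coordLoss_exact_fit_mul (hq : q ⬝ᵥ q ≠ 0) :
    coordLoss lam q p v (((10 - p ⬝ᵥ v) / q ⬝ᵥ q) • q) v * (q ⬝ᵥ q) =
      lam * ((v ⬝ᵥ v) * (q ⬝ᵥ q) + (10 - p ⬝ᵥ v) ^ 2) := by
  simp only [coordLoss, sub_self, zero_dotProduct, dotProduct_smul, smul_dotProduct, smul_eq_mul]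
  field_simp
  ring

lemma coordLoss_sub_coordLoss_proj (hq : q ⬝ᵥ q ≠ 0) :
    (coordLoss lam q p v a b - coordLoss lam q p v ((q ⬝ᵥ a / q ⬝ᵥ q) • q) b) * (q ⬝ᵥ q) =
      lam * ((q ⬝ᵥ q) * (a ⬝ᵥ a) - (q ⬝ᵥ a) ^ 2) := by
  simp only [coordLoss, dotProduct_smul, smul_dotProduct, smul_eq_mul]
  field_simp
  ring

lemma coordLoss_mul_le_of_near_min (hlam : 0 ≤ lam) (hp : p ⬝ᵥ p ≤ 1) (hq : q ⬝ᵥ q ≤ 1)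
    (hv : v ⬝ᵥ v ≤ 1)
    (hmin : IsNearMinimizer lam q p v a b)
    (hq₀ : 0 < q ⬝ᵥ q) : coordLoss lam q p v a b * (q ⬝ᵥ q) ≤ 125 * lam := by
  have hpv := abs_le.mp (abs_dotProduct_le_one hp hv)
  have hvq : (v ⬝ᵥ v) * (q ⬝ᵥ q) ≤ 1 := mul_le_one₀ hv hq₀.le hq
  have hbound : (v ⬝ᵥ v) * (q ⬝ᵥ q) + (10 - p ⬝ᵥ v) ^ 2 ≤ 122 := by nlinarith
  calc coordLoss lam q p v a b * (q ⬝ᵥ q)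
      ≤ (101 / 100) ^ 2 * coordLoss lam q p v (((10 - p ⬝ᵥ v) / q ⬝ᵥ q) • q) v * (q ⬝ᵥ q) :=
        mul_le_mul_of_nonneg_right (hmin _ _) hq₀.le
    _ = (101 / 100) ^ 2 * (lam * ((v ⬝ᵥ v) * (q ⬝ᵥ q) + (10 - p ⬝ᵥ v) ^ 2)) := by
        rw [mul_assoc, coordLoss_exact_fit_mul hq₀.ne']
    _ ≤ 125 * lam := by nlinarith [mul_le_mul_of_nonneg_left hbound hlam]

lemma gram_le_of_near_min (hlam : 0 < lam)
    (hmin : IsNearMinimizer lam q p v a b)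
    (hq₀ : 0 < q ⬝ᵥ q) (hloss : coordLoss lam q p v a b * (q ⬝ᵥ q) ≤ 125 * lam) :
    (q ⬝ᵥ q) * (a ⬝ᵥ a) - (q ⬝ᵥ a) ^ 2 ≤ 5 / 2 := by
  have hdiff := coordLoss_sub_coordLoss_proj (lam := lam) (p := p) (v := v) (a := a) (b := b)
    hq₀.ne'
  have hcmp := mul_le_mul_of_nonneg_right (hmin ((q ⬝ᵥ a / q ⬝ᵥ q) • q) b) hq₀.le
  nlinarith

lemma coordLoss_le_three_halves (hlam : 0 ≤ lam) (hlam' : lam ≤ 1 / 4) (hp : p ⬝ᵥ p ≤ 1)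
    (hv : v ⬝ᵥ v ≤ 1)
    (hmin : IsNearMinimizer lam q p v a b) :
    coordLoss lam q p v a b ≤ 3 / 2 := by
  have hpv := abs_le.mp (abs_dotProduct_le_one hp hv)
  have h0 : coordLoss lam q p v 0 v = 1 / 100 * (p ⬝ᵥ v - 10) ^ 2 + lam * (v ⬝ᵥ v) := by
    simp [coordLoss]
  calc coordLoss lam q p v a b ≤ (101 / 100) ^ 2 * coordLoss lam q p v 0 v := hmin 0 v
    _ ≤ 3 / 2 := by rw [h0]; nlinarith

lemma le_dotProduct_of_abs_residual_le (hlam : 0 ≤ lam) (hp : p ⬝ᵥ p ≤ 1) (hv : v ⬝ᵥ v ≤ 1)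
    (hloss : coordLoss lam q p v a b ≤ 3 / 2) (hres : |10 - (q ⬝ᵥ a + p ⬝ᵥ b)| ≤ 1) :
    67 / 10 ≤ q ⬝ᵥ a := by
  have hB := (dotProduct_sub_self_le_coordLoss hlam).trans hloss
  have hη : (p ⬝ᵥ (b - v)) ^ 2 ≤ 3 / 2 :=
    (sq_dotProduct_le _ _).trans (by nlinarith [dotProduct_self_nonneg (b - v)])
  have hsplit : p ⬝ᵥ b = p ⬝ᵥ v + p ⬝ᵥ (b - v) := by rw [dotProduct_sub]; ring
  have hpv := abs_le.mp (abs_dotProduct_le_one hp hv)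
  have := abs_le.mp hres
  nlinarith

lemma sqrt_lt_of_threshold {τ : ℝ} (hlam : 0 < lam) (hD : 1 ≤ D)
    (hlamD : lam * D ^ 2 ≤ 1 / 1000) (hτ₀ : 0 ≤ τ) (hτ : 2 * lam * D ^ 2 ≤ τ ^ 2)
    (hp : p ⬝ᵥ p ≤ 1) (hq : q ⬝ᵥ q ≤ 1) (hv : v ⬝ᵥ v ≤ 1)
    (hmin : IsNearMinimizer lam q p v a b)
    (hthr : D ≤ √(a ⬝ᵥ a + (b - v) ⬝ᵥ (b - v)) ∨ τ ≤ |10 - (q ⬝ᵥ a + p ⬝ᵥ b)|) :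
    √(q ⬝ᵥ q) < 100 / D := by
  by_contra! hge
  have hqD : 10000 ≤ (q ⬝ᵥ q) * D ^ 2 := by
    have h := (Real.le_sqrt' (div_pos (by norm_num) (by linarith))).mp hge
    rw [div_pow, div_le_iff₀ (by positivity)] at h
    linarith
  have hq₀ : 0 < q ⬝ᵥ q := by
    by_contra! h
    nlinarith [mul_nonpos_of_nonpos_of_nonneg h (sq_nonneg D)]
  have hB := dotProduct_sub_self_le_coordLoss (q := q) (p := p) (v := v) (a := a) (b := b) hlam.le
  have hloss : coordLoss lam q p v a b * 10000 ≤ 125 * (lam * D ^ 2) := by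
    have := coordLoss_mul_le_of_near_min hlam.le hp hq hv hmin hq₀
    nlinarith [dotProduct_self_nonneg (b - v)]
  rcases hthr with hy | hres
  · have hY := (Real.le_sqrt' (by linarith)).mp hy
    have ha : (a ⬝ᵥ a) * 10000 ≤ 125 * D ^ 2 := by
      have := lam_mul_le_coordLoss (lam := lam) (q := q) (p := p) (v := v) (a := a) (b := b)
      have := dotProduct_self_nonneg b
      refine le_of_mul_le_mul_left ?_ hlam
      nlinarith
    nlinarith
  · have hsq := sq_residual_le_coordLoss (q := q) (p := p) (v := v) (a := a) (b := b) hlam.le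
    have hlt : (10 - (q ⬝ᵥ a + p ⬝ᵥ b)) ^ 2 < τ ^ 2 := by nlinarith
    exact (abs_lt_of_sq_lt_sq hlt hτ₀).not_ge hres

lemma lineSearch_bound_of_not_threshold (hlam : 0 < lam) (hD : 1 ≤ D)
    (hlamD : lam * D ^ 2 ≤ 1 / 1000) (hp : p ⬝ᵥ p ≤ 1) (hq : q ⬝ᵥ q ≤ 1) (hv : v ⬝ᵥ v ≤ 1)
    (hmin : IsNearMinimizer lam q p v a b)
    (hy : a ⬝ᵥ a + (b - v) ⬝ᵥ (b - v) < D ^ 2) (hres : |10 - (q ⬝ᵥ a + p ⬝ᵥ b)| ≤ 1) :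
    0 < a ⬝ᵥ a + (b - v) ⬝ᵥ (b - v) ∧
      9 * ((q ⬝ᵥ q) * (a ⬝ᵥ a + (b - v) ⬝ᵥ (b - v)) + (p ⬝ᵥ (b - v)) ^ 2 - (q ⬝ᵥ a) ^ 2) ≤
        (q ⬝ᵥ q) * (a ⬝ᵥ a + (b - v) ⬝ᵥ (b - v)) := by
  have hlam' : lam ≤ 1 / 4 := by nlinarith
  have hK := le_dotProduct_of_abs_residual_le hlam.le hp hv
    (coordLoss_le_three_halves hlam.le hlam' hp hv hmin) hres
  have hA := dotProduct_self_nonneg a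
  have hB₀ := dotProduct_self_nonneg (b - v)
  have hKa := sq_dotProduct_le q a
  have hq₀ : 0 < q ⬝ᵥ q := by
    by_contra! h
    nlinarith [mul_nonpos_of_nonpos_of_nonneg h hA]
  have hqD : 44 ≤ (q ⬝ᵥ q) * D ^ 2 := by nlinarith
  have hloss := coordLoss_mul_le_of_near_min hlam.le hp hq hv hmin hq₀
  have hB : (b - v) ⬝ᵥ (b - v) ≤ 1 / 100 := by
    have := dotProduct_sub_self_le_coordLoss (q := q) (p := p) (v := v) (a := a) (b := b) hlam.le
    nlinarith
  have hη : (p ⬝ᵥ (b - v)) ^ 2 ≤ 1 / 100 :=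
    (sq_dotProduct_le _ _).trans (by nlinarith)
  have hG := gram_le_of_near_min hlam hmin hq₀ hloss
  constructor
  · nlinarith
  · nlinarith

end Coordinates

lemma regression_parameters {t : ℝ} (ht : 2 ≤ t) :
    0 < 1 / t ^ 40 ∧ 1 ≤ t ^ 3 ∧ 1 / t ^ 40 * (t ^ 3) ^ 2 ≤ 1 / 1000 ∧
      2 * (1 / t ^ 40) * (t ^ 3) ^ 2 ≤ (200 * t ^ 4 * √(1 / t ^ 40)) ^ 2 ∧
      200 * t ^ 4 * √(1 / t ^ 40) ≤ 1 := by
  have ht₀ : 0 < t := by linarith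
  have hlamD : 1 / t ^ 40 * (t ^ 3) ^ 2 = 1 / t ^ 34 := by field_simp
  have hτ : (200 * t ^ 4 * √(1 / t ^ 40)) ^ 2 = 40000 / t ^ 32 := by
    rw [mul_pow, Real.sq_sqrt (by positivity)]
    field_simp
    ring
  have h32 : (2 : ℝ) ^ 32 ≤ t ^ 32 := pow_le_pow_left₀ (by norm_num) ht 32
  have h34 : t ^ 34 = t ^ 2 * t ^ 32 := by ring
  have ht2 : 4 ≤ t ^ 2 := by nlinarith
  refine ⟨by positivity, one_le_pow₀ (by linarith), ?_, ?_, ?_⟩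
  · rw [hlamD, div_le_div_iff₀ (by positivity) (by norm_num), h34]
    nlinarith
  · rw [mul_assoc, hlamD, hτ, mul_one_div, div_le_div_iff₀ (by positivity) (by positivity), h34]
    nlinarith [pow_pos ht₀ 32]
  · refine (pow_le_one_iff_of_nonneg (by positivity) two_ne_zero).mp ?_
    rw [hτ, div_le_one (by positivity)]
    linarith

lemma const_dotProduct_const_le_one {k d : ℕ} (hk : k ≤ d) :
    (fun _ : Fin k => 1 / √(d : ℝ)) ⬝ᵥ (fun _ => 1 / √(d : ℝ)) ≤ 1 := by
  have hsum : (fun _ : Fin k => 1 / √(d : ℝ)) ⬝ᵥ (fun _ => 1 / √(d : ℝ)) = k / d := by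
    simp [dotProduct, div_eq_mul_inv, ← mul_inv, Real.mul_self_sqrt]
  rw [hsum]
  exact div_le_one_of_le₀ (by exact_mod_cast hk) (Nat.cast_nonneg d)

/-- Lemma 4.12: a `1/100`-approximate solution of the regression instance
yields a `(1/3, O(1/d³))`-approximate projection of `z` onto `U`. There are constants `C`
and `D₀` such that for all `d ≥ D₀`: with `λ = d^{−40}`, `ε = 1/100`,
`x* = (1/√d)·Σ_j U⊥_{·,j}`, any `ε`-approximate minimizer `x'` of `√L`, and `ẑ` computed by
the thresholding/line-search rule (with `y = x' − x*` and `ξ* = ⟨z,y⟩/‖y‖₂²`, where `ẑ = 0`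
if `‖y‖₂ ≥ d³` or `|10 − ⟨z,x'⟩| ≥ 200d⁴√λ`, and `ẑ = ξ*·y` otherwise), one has
`‖ẑ − UUᵀz‖₂ ≤ (1/3)‖UUᵀz‖₂ + C/d³`. -/
theorem approx_regression_gives_approx_projection :
    ∃ (C : ℝ) (D₀ : ℕ), ∀ d : ℕ, D₀ ≤ d → ∀ dOne : ℕ, 1 ≤ dOne → dOne ≤ d →
    ∀ (U : Matrix (Fin d) (Fin dOne) ℝ) (Up : Matrix (Fin d) (Fin (d - dOne)) ℝ),
      Uᵀ * U = 1 → Upᵀ * Up = 1 → Uᵀ * Up = 0 → U * Uᵀ + Up * Upᵀ = 1 →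
    ∀ z : Fin d → ℝ, Real.sqrt (z ⬝ᵥ z) ≤ 1 →
    ∀ lam ε : ℝ, lam = 1 / (d : ℝ) ^ 40 → ε = 1 / 100 →
    ∀ xstar : Fin d → ℝ, xstar = Up *ᵥ (fun _ => 1 / Real.sqrt (d : ℝ)) →
    ∀ L : (Fin d → ℝ) → ℝ,
      (∀ x, L x = (Upᵀ *ᵥ x - (fun _ => 1 / Real.sqrt (d : ℝ)))
                    ⬝ᵥ (Upᵀ *ᵥ x - (fun _ => 1 / Real.sqrt (d : ℝ)))
        + (1 / 100) * (z ⬝ᵥ x - 10) ^ 2 + lam * (x ⬝ᵥ x)) →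
    ∀ x' : Fin d → ℝ, (∀ x, Real.sqrt (L x') ≤ (1 + ε) * Real.sqrt (L x)) →
    ∀ yv : Fin d → ℝ, yv = x' - xstar →
    ∀ zU : Fin d → ℝ, zU = U *ᵥ (Uᵀ *ᵥ z) →
    (((d : ℝ) ^ 3 ≤ Real.sqrt (yv ⬝ᵥ yv) ∨
        200 * (d : ℝ) ^ 4 * Real.sqrt lam ≤ |10 - z ⬝ᵥ x'|) →
      Real.sqrt (((0 : Fin d → ℝ) - zU) ⬝ᵥ ((0 : Fin d → ℝ) - zU)) ≤
        (1 / 3) * Real.sqrt (zU ⬝ᵥ zU) + C / (d : ℝ) ^ 3) ∧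
    (¬ ((d : ℝ) ^ 3 ≤ Real.sqrt (yv ⬝ᵥ yv) ∨
        200 * (d : ℝ) ^ 4 * Real.sqrt lam ≤ |10 - z ⬝ᵥ x'|) →
      Real.sqrt ((((z ⬝ᵥ yv) / (yv ⬝ᵥ yv)) • yv - zU) ⬝ᵥ (((z ⬝ᵥ yv) / (yv ⬝ᵥ yv)) • yv - zU))
        ≤ (1 / 3) * Real.sqrt (zU ⬝ᵥ zU) + C / (d : ℝ) ^ 3) := by
  refine ⟨100, 2, fun d hd dOne _ _ U Up hU hUp hUUp hI z hz lam ε hlam hε xstar hxs L hL x'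
    happrox yv hyv zU hzU => ?_⟩
  subst hlam hε hxs hyv hzU
  obtain ⟨hlam₀, hD, hlamD, hτ, hτ₁⟩ := regression_parameters (t := d) (by exact_mod_cast hd)
  set v : Fin (d - dOne) → ℝ := fun _ => 1 / √(d : ℝ)
  obtain ⟨q, p, rfl⟩ : ∃ q p, z = U *ᵥ q + Up *ᵥ p :=
    ⟨_, _, (mulVec_transpose_mulVec_add hI z).symm⟩
  obtain ⟨a, b, rfl⟩ : ∃ a b, x' = U *ᵥ a + Up *ᵥ b :=
    ⟨_, _, (mulVec_transpose_mulVec_add hI x').symm⟩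
  have hmin := isNearMinimizer_of_sqrt_le hU hUp hUUp hlam₀.le hL happrox
  have hdot := dotProduct_mulVec_add_mulVec hU hUp hUUp
  obtain ⟨hq, hp⟩ : q ⬝ᵥ q ≤ 1 ∧ p ⬝ᵥ p ≤ 1 := by
    rw [Real.sqrt_le_one, hdot] at hz
    constructor <;> linarith [dotProduct_self_nonneg q, dotProduct_self_nonneg p]
  have hv : v ⬝ᵥ v ≤ 1 := const_dotProduct_const_le_one (Nat.sub_le d dOne)
  have hy : U *ᵥ a + Up *ᵥ b - Up *ᵥ v = U *ᵥ a + Up *ᵥ (b - v) := by rw [mulVec_sub]; abel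
  have hzU : U *ᵥ (Uᵀ *ᵥ (U *ᵥ q + Up *ᵥ p)) = U *ᵥ q + Up *ᵥ 0 := by
    rw [transpose_mulVec_add_mulVec_left hU hUUp, mulVec_zero, add_zero]
  have hzr : U *ᵥ q + Up *ᵥ p - (U *ᵥ q + Up *ᵥ 0) = U *ᵥ 0 + Up *ᵥ p := by simp
  rw [hy, hzU]
  refine ⟨fun hthr => ?_, fun hacc => ?_⟩
  · rw [hdot, hdot] at hthr
    have hlt := sqrt_lt_of_threshold hlam₀ hD hlamD (by positivity) hτ hp hq hv hmin hthr
    rw [zero_sub, neg_dotProduct, dotProduct_neg, neg_neg, hdot, dotProduct_zero, add_zero]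
    linarith [Real.sqrt_nonneg (q ⬝ᵥ q)]
  · rw [hdot, hdot, not_or, not_le, not_le, Real.sqrt_lt' (by positivity)] at hacc
    obtain ⟨hY₀, hbound⟩ := lineSearch_bound_of_not_threshold hlam₀ hD hlamD hp hq hv hmin
      hacc.1 (hacc.2.le.trans hτ₁)
    refine le_add_of_le_of_nonneg (sqrt_lineSearch_error_le ?_ ?_) (by positivity)
    · rwa [hdot]
    · simpa only [hzr, hdot, dotProduct_zero, zero_dotProduct, add_zero, zero_add] using hbound
end

section
/- Let 0 < ε < 1/8, 0 < σ_min ≤ σ_max, and κ = σ_max/σ_min. Let M ∈ ℝ^{n×d} have least singular value at least σ_min and largest singular value at most σ_max. Let B = { x ∈ [−1,1]^d : every coordinate of x is an integer multiple of ε/(100·κ·d) }. Suppose Y ∈ ℝ^{d×d} is symmetric positive semidefinite and satisfies |xᵀ Y x − ‖M x‖₂²| ≤ (ε/2)·‖M x‖₂² for all x ∈ B. Then for every x ∈ ℝ^d, |xᵀ Y x − ‖M x‖₂²| ≤ ε·‖M x‖₂²; equivalently (1−ε)·MᵀM ⪯ Y ⪯ (1+ε)·MᵀM. -/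
/-!
Write `Y = RᵀR`; then both sides are the squares `‖Rx‖²` and `‖Mx‖²` of norms of linear maps on
Euclidean space, and the claim is homogeneous of degree two. The grid contains `δ eᵢ`, which
bounds every column of `R` by `2σ_max`, so a vector `h` with `|hᵢ| ≤ δ/2` has
`‖Rh‖, ‖Mh‖ ≤ σ_max d δ = ε σ_min / 100`. Rescale `x` to norm `1/2` and round it coordinatewise
to a grid point `y`: since `‖Mx‖ ≥ σ_min/2`, both `‖M(x - y)‖` and `‖R(x - y)‖` are at most
`(ε/50) ‖Mx‖`, and the triangle inequality turns the `ε/2`-agreement at `y` into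
`ε`-agreement at `x`.
-/

open Matrix WithLp

lemma abs_sq_sub_sq_le_of_near {ε a a' b b' : ℝ} (hε0 : 0 ≤ ε) (hε : ε ≤ 1 / 8) (ha : 0 ≤ a)
    (hb' : 0 ≤ b') (ha' : |a' - a| ≤ ε / 50 * a) (hb : |b' - b| ≤ ε / 50 * a)
    (hclose : |b' ^ 2 - a' ^ 2| ≤ ε / 2 * a' ^ 2) : |b ^ 2 - a ^ 2| ≤ ε * a ^ 2 := by
  obtain ⟨ha'_ge, ha'_le⟩ := abs_le.mp ha'
  obtain ⟨hb_ge, hb_le⟩ := abs_le.mp hb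
  obtain ⟨hclose_ge, hclose_le⟩ := abs_le.mp hclose
  have ha'_lower : 0 ≤ (1 - ε / 50) * a := mul_nonneg (by linarith) ha
  have hb'_le : b' ≤ (1 + ε / 4) * (1 + ε / 50) * a := by
    refine le_of_pow_le_pow_left₀ two_ne_zero (by positivity) ?_
    calc b' ^ 2 ≤ (1 + ε / 2) * a' ^ 2 := by linarith
      _ ≤ (1 + ε / 4) ^ 2 * ((1 + ε / 50) * a) ^ 2 := by
        gcongr
        · nlinarith
        · linarith
        · linarith
      _ = _ := by ring
  have hb'_ge : (1 - ε / 3) * (1 - ε / 50) * a ≤ b' := by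
    refine le_of_pow_le_pow_left₀ two_ne_zero hb' ?_
    calc ((1 - ε / 3) * (1 - ε / 50) * a) ^ 2 = (1 - ε / 3) ^ 2 * ((1 - ε / 50) * a) ^ 2 := by ring
      _ ≤ (1 - ε / 2) * a' ^ 2 := by
        gcongr
        · linarith
        · nlinarith
        · linarith
      _ ≤ b' ^ 2 := by linarith
  rw [abs_le]
  constructor
  · have hc : 1 - ε ≤ ((1 - ε / 3) * (1 - ε / 50) - ε / 50) ^ 2 := by
      nlinarith [pow_nonneg hε0 3, pow_nonneg hε0 4, mul_nonneg hε0 (sub_nonneg.2 hε)]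
    have hc0 : 0 ≤ (1 - ε / 3) * (1 - ε / 50) - ε / 50 := by nlinarith
    have : (((1 - ε / 3) * (1 - ε / 50) - ε / 50) * a) ^ 2 ≤ b ^ 2 :=
      pow_le_pow_left₀ (mul_nonneg hc0 ha) (by linarith) 2
    nlinarith [mul_le_mul_of_nonneg_right hc (sq_nonneg a)]
  · have hc : ((1 + ε / 4) * (1 + ε / 50) + ε / 50) ^ 2 ≤ 1 + ε := by
      nlinarith [pow_nonneg hε0 3, pow_nonneg hε0 4, mul_nonneg hε0 (sub_nonneg.2 hε)]
    have : b ^ 2 ≤ (((1 + ε / 4) * (1 + ε / 50) + ε / 50) * a) ^ 2 :=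
      pow_le_pow_left₀ (by nlinarith) (by nlinarith) 2
    nlinarith [mul_le_mul_of_nonneg_right hc (sq_nonneg a)]

section LinearMaps

variable {E F G : Type*} [AddCommGroup E] [Module ℝ E] [SeminormedAddCommGroup F]
  [NormedSpace ℝ F] [SeminormedAddCommGroup G] [NormedSpace ℝ G]

lemma abs_norm_sq_sub_norm_sq_le_of_smul (f : E →ₗ[ℝ] F) (g : E →ₗ[ℝ] G) {k c : ℝ} (hc : c ≠ 0)
    {x : E} (h : |‖g (c • x)‖ ^ 2 - ‖f (c • x)‖ ^ 2| ≤ k * ‖f (c • x)‖ ^ 2) :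
    |‖g x‖ ^ 2 - ‖f x‖ ^ 2| ≤ k * ‖f x‖ ^ 2 := by
  simp only [map_smul, norm_smul, mul_pow, Real.norm_eq_abs, sq_abs, ← mul_sub, abs_mul,
    abs_of_nonneg (sq_nonneg c), mul_left_comm k] at h
  exact le_of_mul_le_mul_left h (by positivity)

lemma norm_map_le_mul_sum_abs_repr {ι : Type*} [Fintype ι] (b : Module.Basis ι ℝ E)
    (f : E →ₗ[ℝ] F) {C : ℝ} (hC : ∀ i, ‖f (b i)‖ ≤ C) (x : E) :
    ‖f x‖ ≤ C * ∑ i, |b.repr x i| := by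
  calc ‖f x‖ = ‖(∑ i, b.repr x i • f (b i) : F)‖ := by
        conv_lhs => rw [← b.sum_repr x]
        simp only [map_sum, map_smul]
    _ ≤ ∑ i, |b.repr x i| * ‖f (b i)‖ := by
        simpa only [norm_smul, Real.norm_eq_abs] using
          norm_sum_le Finset.univ fun i => b.repr x i • f (b i)
    _ ≤ ∑ i, |b.repr x i| * C := by gcongr with i; exact hC i
    _ = C * ∑ i, |b.repr x i| := by rw [Finset.mul_sum]; simp only [mul_comm]

end LinearMaps

section Grid

variable {ι : Type*}

def cubeGrid (ι : Type*) (δ : ℝ) : Set (EuclideanSpace ℝ ι) :=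
  {y | ∀ i, |y i| ≤ 1 ∧ ∃ k : ℤ, y i = k * δ}

lemma smul_basisFun_mem_cubeGrid [Fintype ι] {δ : ℝ} (hδ0 : 0 ≤ δ) (hδ1 : δ ≤ 1) (i : ι) :
    δ • PiLp.basisFun 2 ℝ ι i ∈ cubeGrid ι δ := by
  classical
  intro j
  by_cases h : j = i
  · subst h; simpa [abs_of_nonneg hδ0, hδ1] using ⟨1, by simp⟩
  · simp [h]

lemma exists_mem_cubeGrid_near {δ : ℝ} (hδ0 : 0 < δ) (hδ1 : δ ≤ 1) (u : EuclideanSpace ℝ ι)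
    (hu : ∀ i, |u i| ≤ 1 / 2) : ∃ y ∈ cubeGrid ι δ, ∀ i, |u i - y i| ≤ δ / 2 := by
  have hround (i : ι) : |u i - round (u i / δ) * δ| ≤ δ / 2 := by
    calc |u i - round (u i / δ) * δ| = |u i / δ - round (u i / δ)| * δ := by
          rw [← abs_of_pos hδ0, ← abs_mul, abs_of_pos hδ0, sub_mul, div_mul_cancel₀ _ hδ0.ne']
      _ ≤ 1 / 2 * δ := by gcongr; exact abs_sub_round _
      _ = δ / 2 := by ring
  refine ⟨toLp 2 fun i => round (u i / δ) * δ, fun i => ⟨?_, round (u i / δ), rfl⟩, hround⟩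
  have := abs_sub_abs_le_abs_sub (round (u i / δ) * δ) (u i)
  rw [abs_sub_comm] at this
  linarith [hround i, hu i]

variable {F G : Type*} [SeminormedAddCommGroup F] [NormedSpace ℝ F] [SeminormedAddCommGroup G]
  [NormedSpace ℝ G]

lemma norm_map_basisFun_le_of_cubeGrid [Fintype ι] (f : EuclideanSpace ℝ ι →ₗ[ℝ] F)
    (g : EuclideanSpace ℝ ι →ₗ[ℝ] G) {ε σmax δ : ℝ} (hε : ε ≤ 6) (hδ0 : 0 < δ) (hδ1 : δ ≤ 1)
    (hf_le : ∀ x, ‖f x‖ ≤ σmax * ‖x‖)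
    (hgrid : ∀ y ∈ cubeGrid ι δ, |‖g y‖ ^ 2 - ‖f y‖ ^ 2| ≤ ε / 2 * ‖f y‖ ^ 2) (i : ι) :
    ‖g (PiLp.basisFun 2 ℝ ι i)‖ ≤ 2 * σmax := by
  classical
  have hclose := abs_norm_sq_sub_norm_sq_le_of_smul f g hδ0.ne'
    (hgrid _ (smul_basisFun_mem_cubeGrid hδ0.le hδ1 i))
  have hf : ‖f (PiLp.basisFun 2 ℝ ι i)‖ ≤ σmax := by
    simpa [PiLp.norm_single] using hf_le (PiLp.basisFun 2 ℝ ι i)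
  refine le_of_pow_le_pow_left₀ two_ne_zero
    (by linarith [norm_nonneg (f (PiLp.basisFun 2 ℝ ι i))]) ?_
  calc ‖g (PiLp.basisFun 2 ℝ ι i)‖ ^ 2
      ≤ (1 + ε / 2) * ‖f (PiLp.basisFun 2 ℝ ι i)‖ ^ 2 := by linarith [(abs_le.mp hclose).2]
    _ ≤ 4 * σmax ^ 2 := by gcongr; linarith
    _ = (2 * σmax) ^ 2 := by ring

theorem abs_norm_sq_sub_norm_sq_le_of_cubeGrid [Fintype ι] (f : EuclideanSpace ℝ ι →ₗ[ℝ] F)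
    (g : EuclideanSpace ℝ ι →ₗ[ℝ] G) {ε σmin σmax δ : ℝ} (hε0 : 0 ≤ ε) (hε : ε ≤ 1 / 8)
    (hδ0 : 0 < δ) (hδ1 : δ ≤ 1) (hδ : σmax * Fintype.card ι * δ ≤ ε * σmin / 100)
    (hf_ge : ∀ x, σmin * ‖x‖ ≤ ‖f x‖) (hf_le : ∀ x, ‖f x‖ ≤ σmax * ‖x‖)
    (hgrid : ∀ y ∈ cubeGrid ι δ, |‖g y‖ ^ 2 - ‖f y‖ ^ 2| ≤ ε / 2 * ‖f y‖ ^ 2)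
    (x : EuclideanSpace ℝ ι) : |‖g x‖ ^ 2 - ‖f x‖ ^ 2| ≤ ε * ‖f x‖ ^ 2 := by
  classical
  rcases eq_or_ne x 0 with rfl | hx
  · simp
  have hx' : 0 < ‖x‖ := norm_pos_iff.mpr hx
  -- at norm `1/2`, rounding to the grid cannot leave the cube `[-1, 1]^ι`
  refine abs_norm_sq_sub_norm_sq_le_of_smul f g (c := (2 * ‖x‖)⁻¹) (by positivity) ?_
  set u := (2 * ‖x‖)⁻¹ • x with hu_def
  have hu : ‖u‖ = 1 / 2 := by
    rw [hu_def, norm_smul, norm_inv, norm_mul, Real.norm_two, norm_norm]; field_simp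
  obtain ⟨y, hy, hyu⟩ := exists_mem_cubeGrid_near hδ0 hδ1 u fun i =>
    hu ▸ (PiLp.norm_apply_le u i)
  have hσmax : 0 ≤ σmax := nonneg_of_mul_nonneg_left ((norm_nonneg _).trans (hf_le x)) hx'
  have hf_col (i : ι) : ‖f (PiLp.basisFun 2 ℝ ι i)‖ ≤ 2 * σmax := by
    have := hf_le (PiLp.basisFun 2 ℝ ι i)
    simp only [PiLp.basisFun_apply, PiLp.norm_single, norm_one, mul_one] at this ⊢
    linarith
  have hg_col := norm_map_basisFun_le_of_cubeGrid f g (by linarith) hδ0 hδ1 hf_le hgrid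
  have hsmall : 2 * σmax * ∑ i, |(PiLp.basisFun 2 ℝ ι).repr (u - y) i| ≤ ε / 50 * ‖f u‖ :=
    calc 2 * σmax * ∑ i, |(PiLp.basisFun 2 ℝ ι).repr (u - y) i|
        ≤ 2 * σmax * ∑ _i : ι, δ / 2 := by
          gcongr with i
          simpa using hyu i
      _ = σmax * Fintype.card ι * δ := by
          simp only [Finset.sum_const, Finset.card_univ, nsmul_eq_mul]; ring
      _ ≤ ε / 50 * (σmin * ‖u‖) := by rw [hu]; linarith
      _ ≤ ε / 50 * ‖f u‖ := by gcongr; exact hf_ge u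
  refine abs_sq_sub_sq_le_of_near hε0 hε (norm_nonneg _) (norm_nonneg _) ?_ ?_ (hgrid y hy)
  · refine (abs_norm_sub_norm_le _ _).trans ?_
    rw [← map_sub, ← neg_sub, map_neg, norm_neg]
    exact (norm_map_le_mul_sum_abs_repr _ f hf_col _).trans hsmall
  · refine (abs_norm_sub_norm_le _ _).trans ?_
    rw [← map_sub, ← neg_sub, map_neg, norm_neg]
    exact (norm_map_le_mul_sum_abs_repr _ g hg_col _).trans hsmall

end Grid

section Matrix

variable {m n : Type*} [Fintype m] [Fintype n]

lemma norm_sq_eq_dotProduct (x : EuclideanSpace ℝ n) : ‖x‖ ^ 2 = ofLp x ⬝ᵥ ofLp x := by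
  rw [← real_inner_self_eq_norm_sq, EuclideanSpace.inner_eq_star_dotProduct, star_trivial]

lemma dotProduct_transpose_mul_self_mulVec (A : Matrix m n ℝ) (x : n → ℝ) :
    x ⬝ᵥ ((Aᵀ * A) *ᵥ x) = (A *ᵥ x) ⬝ᵥ (A *ᵥ x) := by
  rw [← mulVec_mulVec, dotProduct_mulVec, vecMul_transpose]

lemma norm_toEuclideanLin_sq [DecidableEq n] (A : Matrix m n ℝ) (x : EuclideanSpace ℝ n) :
    ‖toEuclideanLin A x‖ ^ 2 = (A *ᵥ ofLp x) ⬝ᵥ (A *ᵥ ofLp x) :=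
  norm_sq_eq_dotProduct _

lemma dotProduct_transpose_mul_self_sub_smul_one_mulVec [DecidableEq n] (A : Matrix m n ℝ)
    (c : ℝ) (x : EuclideanSpace ℝ n) :
    ofLp x ⬝ᵥ ((Aᵀ * A - c • 1) *ᵥ ofLp x) = ‖toEuclideanLin A x‖ ^ 2 - c * ‖x‖ ^ 2 := by
  rw [norm_sq_eq_dotProduct, norm_sq_eq_dotProduct, sub_mulVec, dotProduct_sub,
    dotProduct_transpose_mul_self_mulVec, smul_mulVec, one_mulVec, dotProduct_smul, smul_eq_mul]
  rfl

lemma le_norm_toEuclideanLin [DecidableEq n] {A : Matrix m n ℝ} {σ : ℝ}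
    (h : (Aᵀ * A - σ ^ 2 • (1 : Matrix n n ℝ)).PosSemidef) (x : EuclideanSpace ℝ n) :
    σ * ‖x‖ ≤ ‖toEuclideanLin A x‖ := by
  refine le_of_pow_le_pow_left₀ two_ne_zero (norm_nonneg _) ?_
  have := h.dotProduct_mulVec_nonneg (ofLp x)
  rw [star_trivial, dotProduct_transpose_mul_self_sub_smul_one_mulVec] at this
  linarith [mul_pow σ ‖x‖ 2]

lemma norm_toEuclideanLin_le [DecidableEq n] {A : Matrix m n ℝ} {σ : ℝ} (hσ : 0 ≤ σ)
    (h : (σ ^ 2 • (1 : Matrix n n ℝ) - Aᵀ * A).PosSemidef) (x : EuclideanSpace ℝ n) :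
    ‖toEuclideanLin A x‖ ≤ σ * ‖x‖ := by
  refine le_of_pow_le_pow_left₀ two_ne_zero (by positivity) ?_
  have := h.dotProduct_mulVec_nonneg (ofLp x)
  rw [star_trivial, ← neg_sub, neg_mulVec, dotProduct_neg,
    dotProduct_transpose_mul_self_sub_smul_one_mulVec] at this
  linarith [mul_pow σ ‖x‖ 2]

lemma exists_eq_transpose_mul_self [DecidableEq n] {Y : Matrix n n ℝ} (hY : Y.PosSemidef) :
    ∃ B : Matrix n n ℝ, Y = Bᵀ * B := by
  open scoped MatrixOrder in
  obtain ⟨B, hB⟩ := CStarAlgebra.nonneg_iff_eq_star_mul_self.mp hY.nonneg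
  exact ⟨B, by rwa [star_eq_conjTranspose, conjTranspose_eq_transpose_of_trivial] at hB⟩

lemma posSemidef_sub_of_dotProduct_mulVec_le {A C : Matrix n n ℝ} (hA : A.IsHermitian)
    (hC : C.IsHermitian) (h : ∀ x, x ⬝ᵥ (C *ᵥ x) ≤ x ⬝ᵥ (A *ᵥ x)) : (A - C).PosSemidef :=
  .of_dotProduct_mulVec_nonneg (hA.sub hC) fun x => by
    simpa [sub_mulVec, dotProduct_sub] using h x

lemma posSemidef_sub_smul_and_smul_sub_of_abs_le {Y : Matrix n n ℝ}
    (hY : Y.IsHermitian) (A : Matrix m n ℝ) {ε : ℝ}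
    (h : ∀ x, |x ⬝ᵥ (Y *ᵥ x) - (A *ᵥ x) ⬝ᵥ (A *ᵥ x)| ≤ ε * ((A *ᵥ x) ⬝ᵥ (A *ᵥ x))) :
    (Y - (1 - ε) • (Aᵀ * A)).PosSemidef ∧ ((1 + ε) • (Aᵀ * A) - Y).PosSemidef := by
  have hA : (Aᵀ * A).IsHermitian := by
    simpa only [conjTranspose_eq_transpose_of_trivial] using isHermitian_conjTranspose_mul_self A
  refine ⟨posSemidef_sub_of_dotProduct_mulVec_le hY (hA.smul (.all _)) fun x => ?_,
    posSemidef_sub_of_dotProduct_mulVec_le (hA.smul (.all _)) hY fun x => ?_⟩ <;>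
  · simp only [smul_mulVec, dotProduct_smul, smul_eq_mul, dotProduct_transpose_mul_self_mulVec]
    linarith [abs_le.mp (h x)]

end Matrix

/-- ε-net extension argument, Step 2 of the proof of Lemma 5.10. If the
quadratic form of a symmetric PSD matrix `Y` agrees with `‖Mx‖₂²` up to a factor `ε/2` on
the grid `B` of points of `[−1,1]^d` whose coordinates are integer multiples of
`ε/(100κd)` (κ = σ_max/σ_min), then for every `x ∈ ℝ^d`,
`|xᵀYx − ‖Mx‖₂²| ≤ ε‖Mx‖₂²`; equivalently `(1−ε)MᵀM ⪯ Y ⪯ (1+ε)MᵀM`. -/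
theorem grid_agreement_extends_to_all {n d : ℕ}
    (ε σmin σmax : ℝ) (hε0 : 0 < ε) (hε : ε < 1 / 8)
    (hσ0 : 0 < σmin) (hσ : σmin ≤ σmax)
    (M : Matrix (Fin n) (Fin d) ℝ)
    (hMlow : (Mᵀ * M - σmin ^ 2 • (1 : Matrix (Fin d) (Fin d) ℝ)).PosSemidef)
    (hMhigh : (σmax ^ 2 • (1 : Matrix (Fin d) (Fin d) ℝ) - Mᵀ * M).PosSemidef)
    (Y : Matrix (Fin d) (Fin d) ℝ) (hY : Y.PosSemidef)
    (hYgrid : ∀ x : Fin d → ℝ,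
      (∀ i, |x i| ≤ 1 ∧ ∃ k : ℤ, x i = k * (ε / (100 * (σmax / σmin) * d))) →
      |x ⬝ᵥ (Y *ᵥ x) - (M *ᵥ x) ⬝ᵥ (M *ᵥ x)| ≤ (ε / 2) * ((M *ᵥ x) ⬝ᵥ (M *ᵥ x))) :
    (∀ x : Fin d → ℝ,
      |x ⬝ᵥ (Y *ᵥ x) - (M *ᵥ x) ⬝ᵥ (M *ᵥ x)| ≤ ε * ((M *ᵥ x) ⬝ᵥ (M *ᵥ x))) ∧
    (Y - (1 - ε) • (Mᵀ * M)).PosSemidef ∧ ((1 + ε) • (Mᵀ * M) - Y).PosSemidef := by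
  obtain ⟨R, rfl⟩ := exists_eq_transpose_mul_self hY
  have hσmax : 0 < σmax := hσ0.trans_le hσ
  have key : ∀ x : Fin d → ℝ, |x ⬝ᵥ ((Rᵀ * R) *ᵥ x) - (M *ᵥ x) ⬝ᵥ (M *ᵥ x)| ≤
      ε * ((M *ᵥ x) ⬝ᵥ (M *ᵥ x)) := by
    intro x
    rcases Nat.eq_zero_or_pos d with rfl | hd
    · simp [Subsingleton.elim x 0]
    have hd' : (1 : ℝ) ≤ d := by exact_mod_cast hd
    have hκ : 1 ≤ σmax / σmin := (one_le_div hσ0).2 hσ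
    have hδ0 : 0 < ε / (100 * (σmax / σmin) * d) := by positivity
    have hδ1 : ε / (100 * (σmax / σmin) * d) ≤ 1 :=
      div_le_one_of_le₀ (by nlinarith) (by positivity)
    have hδ : σmax * Fintype.card (Fin d) * (ε / (100 * (σmax / σmin) * d)) ≤
        ε * σmin / 100 := by
      rw [Fintype.card_fin]; apply le_of_eq; field_simp
    simpa only [norm_toEuclideanLin_sq, dotProduct_transpose_mul_self_mulVec, ofLp_toLp] using
      abs_norm_sq_sub_norm_sq_le_of_cubeGrid (toEuclideanLin M) (toEuclideanLin R) hε0.le hε.le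
        hδ0 hδ1 hδ (le_norm_toEuclideanLin hMlow) (norm_toEuclideanLin_le hσmax.le hMhigh)
        (fun y hy => by
          simpa only [norm_toEuclideanLin_sq, dotProduct_transpose_mul_self_mulVec] using
            hYgrid (ofLp y) hy)
        (toLp 2 x)
  exact ⟨key, posSemidef_sub_smul_and_smul_sub_of_abs_le hY.1 M key⟩
end
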